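/- arXiv:1603.05838 — 8 statements merged into one kernel-verified Lean document; each statement's English description precedes it below -/
import Mathlib

section
/- Let V be a finite-dimensional real vector space and let I₊, I₋ be two complex structures on V (linear endomorphisms with I₊² = I₋² = -1). Then ker([I₊,I₋]) = ker(I₊+I₋) ⊕ ker(I₊-I₋), where [I₊,I₋] = I₊I₋ - I₋I₊. -/
theorem ker_commutator_decomposition
    (V : Type*) [AddCommGroup V] [Module ℝ V] [FiniteDimensional ℝ V]
    (Ip Im : Module.End ℝ V) (hIp : Ip ^ 2 = -1) (hIm : Im ^ 2 = -1) :
    LinearMap.ker (Ip * Im - Im * Ip)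
      = LinearMap.ker (Ip + Im) ⊔ LinearMap.ker (Ip - Im) ∧
    LinearMap.ker (Ip + Im) ⊓ LinearMap.ker (Ip - Im) = ⊥ := by
  set A := Ip + Im with hA
  set B := Ip - Im with hB
  set C := Ip * Im - Im * Ip with hC
  have hAB : A * B = -C := by
    have h : A * B = Ip ^ 2 - Im ^ 2 - (Ip * Im - Im * Ip) := by
      rw [hA, hB]; noncomm_ring
    rw [h, hIp, hIm, hC]; noncomm_ring
  have hBA : B * A = C := by
    have h : B * A = Ip ^ 2 - Im ^ 2 + (Ip * Im - Im * Ip) := by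
      rw [hA, hB]; noncomm_ring
    rw [h, hIp, hIm, hC]; noncomm_ring
  have hsum : A * A + B * B = (-4 : ℝ) • 1 := by
    have h : A * A + B * B = 2 • (Ip ^ 2) + 2 • (Im ^ 2) := by
      rw [hA, hB]; noncomm_ring
    rw [h, hIp, hIm]
    ext v
    simp [two_smul]
    module
  constructor
  · apply le_antisymm
    · intro v hv
      have hv' : C v = 0 := hv
      rw [Submodule.mem_sup]
      refine ⟨-(4⁻¹ : ℝ) • (B (B v)), ?_, -(4⁻¹ : ℝ) • (A (A v)), ?_, ?_⟩
      · -- A kills it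
        rw [LinearMap.mem_ker, map_smul, smul_eq_zero]
        right
        have h1 : A (B (B v)) = (A * B) (B v) := rfl
        rw [h1, hAB]
        have h2 : (-C) (B v) = -((C * B) v) := rfl
        rw [h2]
        have h3 : C * B = -(B * C) := by
          rw [← hBA, mul_assoc, hAB, ← hBA]; noncomm_ring
        rw [h3]
        simp [Module.End.mul_apply, hv']
      · rw [LinearMap.mem_ker, map_smul, smul_eq_zero]
        right
        have h1 : B (A (A v)) = (B * A) (A v) := rfl
        rw [h1, hBA]
        have h3 : C * A = -(A * C) := by
          have h4 : A * C = -(C * A) := by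
            conv_lhs => rw [← hBA]
            rw [← mul_assoc, hAB]
            noncomm_ring
          rw [h4, neg_neg]
        have h2 : C (A v) = (C * A) v := rfl
        rw [h2, h3]
        simp [Module.End.mul_apply, hv']
      · have := congrArg (fun (T : Module.End ℝ V) => T v) hsum
        simp only [LinearMap.add_apply, Module.End.mul_apply, LinearMap.smul_apply,
          Module.End.one_apply] at this
        rw [← smul_add, add_comm (B (B v)), this, smul_smul]
        norm_num
    · rw [sup_le_iff]
      constructor
      · intro v hv
        have hv' : A v = 0 := hv
        have : C v = (B * A) v := by rw [hBA]
        rw [LinearMap.mem_ker, this, Module.End.mul_apply, hv', map_zero]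
      · intro v hv
        have hv' : B v = 0 := hv
        have : C v = -((A * B) v) := by rw [hAB]; simp
        rw [LinearMap.mem_ker, this, Module.End.mul_apply, hv', map_zero, neg_zero]
  · rw [Submodule.eq_bot_iff]
    intro v hv
    rw [Submodule.mem_inf, LinearMap.mem_ker, LinearMap.mem_ker] at hv
    obtain ⟨h1, h2⟩ := hv
    rw [hA, LinearMap.add_apply] at h1
    rw [hB, LinearMap.sub_apply] at h2
    have hIpv : Ip v = 0 := by
      have : Ip v + Ip v = 0 := by
        have := congrArg₂ (· + ·) h1 h2
        simpa [add_sub_add_comm] using this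
      have h2' : (2 : ℝ) • Ip v = 0 := by rw [two_smul]; exact this
      simpa using h2'
    have : (Ip ^ 2) v = -v := by rw [hIp]; simp
    rw [sq, Module.End.mul_apply, hIpv, map_zero] at this
    simpa using this.symm
end

section
/- Let g be a finite-dimensional complex vector space with a skew-symmetric bilinear bracket [·,·] which is degenerate, i.e. for all x, y ∈ g the element [x,y] lies in the span of x and y. Let A : g → g be a linear map such that the bracket [u,v]_A := [Au, v] is again skew-symmetric. Then [·,·]_A is also degenerate: for all x, y ∈ g, [Ax, y] lies in the span of x and y. -/
theorem degenerate_bracket_twist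
    (g : Type*) [AddCommGroup g] [Module ℂ g] [FiniteDimensional ℂ g]
    (br : g →ₗ[ℂ] g →ₗ[ℂ] g)
    (hskew : ∀ x y, br x y = -br y x)
    (hdeg : ∀ x y, br x y ∈ Submodule.span ℂ {x, y})
    (A : g →ₗ[ℂ] g)
    (hskewA : ∀ x y, br (A x) y = -br (A y) x) :
    ∀ x y, br (A x) y ∈ Submodule.span ℂ {x, y} := by
  -- br (A u) u = 0 for all u
  have hzero : ∀ u : g, br (A u) u = 0 := by
    intro u
    have h := hskewA u u
    have h2 : (2:ℂ) • br (A u) u = 0 := by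
      rw [two_smul]
      nth_rewrite 2 [h]
      simp
    rcases smul_eq_zero.mp h2 with h' | h'
    · norm_num at h'
    · exact h'
  intro x y
  set P := Submodule.span ℂ ({x, y} : Set g) with hP
  have hxP : x ∈ P := Submodule.subset_span (by simp)
  have hyP : y ∈ P := Submodule.subset_span (by simp)
  by_cases hy0 : y = 0
  · simp [hy0]
  by_cases hxy : x ∈ Submodule.span ℂ ({y} : Set g)
  · obtain ⟨c, rfl⟩ := Submodule.mem_span_singleton.mp hxy
    simp only [map_smul, LinearMap.smul_apply]
    rw [hzero y]
    simp
  -- x and y are linearly independent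
  have hind : ∀ a b : ℂ, a • x + b • y = 0 → a = 0 ∧ b = 0 := by
    intro a b hab
    by_cases ha : a = 0
    · subst ha
      simp only [zero_smul, zero_add] at hab
      rcases smul_eq_zero.mp hab with hb | hb
      · exact ⟨rfl, hb⟩
      · exact absurd hb hy0
    · exfalso
      apply hxy
      refine Submodule.mem_span_singleton.mpr ⟨-(a⁻¹ * b), ?_⟩
      have h1 := congrArg (fun v : g => a⁻¹ • v) hab
      simp only [smul_add, smul_smul, inv_mul_cancel₀ ha, one_smul, smul_zero] at h1
      have h2 : x = -((a⁻¹ * b) • y) := eq_neg_of_add_eq_zero_left h1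
      rw [h2, neg_smul]
  -- easy case: A x ∈ P
  by_cases hAx : A x ∈ P
  · have hsub : Submodule.span ℂ ({A x, y} : Set g) ≤ P := by
      rw [Submodule.span_le]
      intro v hv
      rcases hv with h | h
      · exact h ▸ hAx
      · simp at h; exact h ▸ hyP
    exact hsub (hdeg (A x) y)
  -- easy case: A y ∈ P
  by_cases hAy : A y ∈ P
  · have hsub : Submodule.span ℂ ({A y, x} : Set g) ≤ P := by
      rw [Submodule.span_le]
      intro v hv
      rcases hv with h | h
      · exact h ▸ hAy
      · simp at h; exact h ▸ hxP
    rw [hskewA x y]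
    exact neg_mem (hsub (hdeg (A y) x))
  -- main case: A x ∉ P and A y ∉ P, with x, y independent
  -- triple independence with A x
  have hind3x : ∀ a b c : ℂ, a • x + b • y + c • (A x) = 0 → a = 0 ∧ b = 0 ∧ c = 0 := by
    intro a b c habc
    by_cases hc : c = 0
    · subst hc
      simp only [zero_smul, add_zero] at habc
      obtain ⟨ha, hb⟩ := hind a b habc
      exact ⟨ha, hb, rfl⟩
    · exfalso
      apply hAx
      have h1 : c • (A x) = -(a • x + b • y) :=
        eq_neg_of_add_eq_zero_right habc
      have h2 : A x = c⁻¹ • (-(a • x + b • y)) := by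
        rw [← h1, smul_smul, inv_mul_cancel₀ hc, one_smul]
      rw [h2]
      exact Submodule.smul_mem _ _ (neg_mem (add_mem (Submodule.smul_mem _ _ hxP)
        (Submodule.smul_mem _ _ hyP)))
  have hind3y : ∀ a b c : ℂ, a • x + b • y + c • (A y) = 0 → a = 0 ∧ b = 0 ∧ c = 0 := by
    intro a b c habc
    by_cases hc : c = 0
    · subst hc
      simp only [zero_smul, add_zero] at habc
      obtain ⟨ha, hb⟩ := hind a b habc
      exact ⟨ha, hb, rfl⟩
    · exfalso
      apply hAy
      have h1 : c • (A y) = -(a • x + b • y) :=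
        eq_neg_of_add_eq_zero_right habc
      have h2 : A y = c⁻¹ • (-(a • x + b • y)) := by
        rw [← h1, smul_smul, inv_mul_cancel₀ hc, one_smul]
      rw [h2]
      exact Submodule.smul_mem _ _ (neg_mem (add_mem (Submodule.smul_mem _ _ hxP)
        (Submodule.smul_mem _ _ hyP)))
  -- z = br (A x) y equals p • A x
  obtain ⟨p, q, hpq⟩ := Submodule.mem_span_pair.mp (hdeg (A x) y)
  obtain ⟨p', q', hpq'⟩ := Submodule.mem_span_pair.mp (hdeg (A x) (y + x))
  have hval : br (A x) (y + x) = br (A x) y := by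
    rw [map_add, hzero x, add_zero]
  rw [hval] at hpq'
  -- p' • A x + q' • (y + x) = p • A x + q • y
  have heq1 : q' • x + (q' - q) • y + (p' - p) • (A x) = 0 := by
    linear_combination (norm := module) hpq' - hpq
  obtain ⟨hq', hqq, _⟩ := hind3x _ _ _ heq1
  have hq : q = 0 := by
    have h := sub_eq_zero.mp hqq
    rw [← h]; exact hq'
  have hzx : br (A x) y = p • A x := by rw [← hpq, hq, zero_smul, add_zero]
  -- br (A y) x equals r • A y
  obtain ⟨r, s, hrs⟩ := Submodule.mem_span_pair.mp (hdeg (A y) x)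
  obtain ⟨r', s', hrs'⟩ := Submodule.mem_span_pair.mp (hdeg (A y) (x + y))
  have hval2 : br (A y) (x + y) = br (A y) x := by
    rw [map_add, hzero y, add_zero]
  rw [hval2] at hrs'
  have heq2 : (s - s') • x + (-s') • y + (r - r') • (A y) = 0 := by
    linear_combination (norm := module) hrs - hrs'
  obtain ⟨hss', hs', _⟩ := hind3y _ _ _ heq2
  have hs : s = 0 := by
    have h0 : s' = 0 := by
      have := neg_eq_zero.mp hs'
      exact this
    have := sub_eq_zero.mp hss'
    rw [this, h0]
  have hzy : br (A y) x = r • A y := by rw [← hrs, hs, zero_smul, add_zero]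
  -- combine: p • A x + r • A y = 0
  have hcomb : A (p • x + r • y) = 0 := by
    rw [map_add, map_smul, map_smul]
    have h1 : br (A x) y = -(r • A y) := by rw [hskewA x y, hzy]
    rw [hzx] at h1
    rw [h1]; abel
  have hfinal : p • br (A x) y = 0 := by
    have h1 : br (A (p • x + r • y)) y = 0 := by rw [hcomb, map_zero, LinearMap.zero_apply]
    simp only [map_add, map_smul, LinearMap.add_apply, LinearMap.smul_apply,
      hzero y, smul_zero, add_zero] at h1
    exact h1
  rcases smul_eq_zero.mp hfinal with hp | hz
  · rw [hzx, hp, zero_smul]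
    exact zero_mem P
  · rw [hz]
    exact zero_mem P
end

section
/- Let g be a complex Lie algebra. The trilinear-to-quadratic map Λ³g → Sym²g sending u∧v∧w to u·[v,w] + v·[w,u] + w·[u,v] vanishes identically if and only if for all u, v ∈ g the bracket [u,v] lies in the span of u and v. -/
open TensorProduct

/-- The image of `u·v` under the embedding `Sym²g → g ⊗ g`, `u·v ↦ u ⊗ v + v ⊗ u`
(injective in characteristic zero), used to express elements of the symmetric square. -/
noncomputable def symProd {g : Type*} [AddCommGroup g] [Module ℂ g] (u v : g) :
    g ⊗[ℂ] g := u ⊗ₜ[ℂ] v + v ⊗ₜ[ℂ] u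

section aux

variable {g : Type*} [AddCommGroup g] [Module ℂ g]

lemma symProd_comm (u v : g) : symProd u v = symProd v u := by
  simp [symProd, add_comm]

lemma symProd_add_left (u v w : g) :
    symProd (u + v) w = symProd u w + symProd v w := by
  simp [symProd, TensorProduct.add_tmul, TensorProduct.tmul_add]; abel

lemma symProd_smul_left (a : ℂ) (u v : g) :
    symProd (a • u) v = a • symProd u v := by
  simp [symProd, TensorProduct.smul_tmul', TensorProduct.tmul_smul, smul_add]

lemma symProd_add_right (u v w : g) :
    symProd u (v + w) = symProd u v + symProd u w := by
  rw [symProd_comm, symProd_add_left, symProd_comm v u, symProd_comm w u]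

lemma symProd_smul_right (a : ℂ) (u v : g) :
    symProd u (a • v) = a • symProd u v := by
  rw [symProd_comm, symProd_smul_left, symProd_comm]

lemma symProd_neg_right (u v : g) : symProd u (-v) = -symProd u v := by
  have := symProd_smul_right (-1 : ℂ) u v
  simpa using this

end aux

theorem degeneracy_iff_sym_map_vanishes
    (g : Type*) [LieRing g] [LieAlgebra ℂ g] [FiniteDimensional ℂ g] :
    (∀ u v w : g,
        symProd u ⁅v, w⁆ + symProd v ⁅w, u⁆ + symProd w ⁅u, v⁆ = 0)
      ↔ (∀ u v : g, ⁅u, v⁆ ∈ Submodule.span ℂ {u, v}) := by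
  constructor
  · intro H u v
    by_contra hc
    obtain ⟨f, hf1, hf2⟩ :=
      Submodule.exists_dual_map_eq_bot_of_notMem hc inferInstance
    have hfu : f u = 0 := by
      have : f u ∈ Submodule.map f (Submodule.span ℂ ({u, v} : Set g)) :=
        ⟨u, Submodule.subset_span (by simp), rfl⟩
      rw [hf2] at this; simpa using this
    have hfv : f v = 0 := by
      have : f v ∈ Submodule.map f (Submodule.span ℂ ({u, v} : Set g)) :=
        ⟨v, Submodule.subset_span (by simp), rfl⟩
      rw [hf2] at this; simpa using this
    -- the bilinear form (x, y) ↦ f x * f y, as a map on the tensor product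
    let L : g ⊗[ℂ] g →ₗ[ℂ] ℂ :=
      TensorProduct.lift (((LinearMap.mul ℂ ℂ).comp f).compl₂ f)
    have hL : ∀ x y : g, L (symProd x y) = 2 * (f x * f y) := by
      intro x y
      simp only [L, symProd, map_add, TensorProduct.lift.tmul, LinearMap.compl₂_apply,
        LinearMap.comp_apply, LinearMap.mul_apply']
      ring
    have hE := H u v ⁅u, v⁆
    have h0 := congrArg L hE
    rw [map_add, map_add, hL, hL, hL, hfu, hfv] at h0
    simp only [map_zero] at h0
    have h2 : (2 : ℂ) * (f ⁅u, v⁆ * f ⁅u, v⁆) = 0 := by linear_combination h0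
    rcases mul_eq_zero.mp h2 with h | h
    · norm_num at h
    · exact hf1 (by rcases mul_eq_zero.mp h with h | h <;> exact h)
  · intro H u v w
    by_cases hw : w ∈ Submodule.span ℂ ({u, v} : Set g)
    · obtain ⟨s, t, hst⟩ := Submodule.mem_span_pair.mp hw
      subst hst
      simp only [lie_add, lie_smul, add_lie, smul_lie, lie_self, smul_zero, add_zero, zero_add]
      simp only [show ⁅v, u⁆ = -⁅u, v⁆ from (lie_skew v u).symm, smul_neg,
        symProd_neg_right, symProd_add_left, symProd_smul_left, symProd_smul_right]
      abel
    by_cases hv : v ∈ Submodule.span ℂ ({u, w} : Set g)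
    · obtain ⟨s, t, hst⟩ := Submodule.mem_span_pair.mp hv
      subst hst
      simp only [lie_add, lie_smul, add_lie, smul_lie, lie_self, smul_zero, add_zero, zero_add]
      simp only [show ⁅w, u⁆ = -⁅u, w⁆ from (lie_skew w u).symm, smul_neg,
        symProd_neg_right, symProd_add_left, symProd_smul_left, symProd_smul_right]
      abel
    by_cases hu : u ∈ Submodule.span ℂ ({v, w} : Set g)
    · obtain ⟨s, t, hst⟩ := Submodule.mem_span_pair.mp hu
      subst hst
      simp only [lie_add, lie_smul, add_lie, smul_lie, lie_self, smul_zero, add_zero, zero_add]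
      simp only [show ⁅w, v⁆ = -⁅v, w⁆ from (lie_skew w v).symm, smul_neg,
        symProd_neg_right, symProd_add_left, symProd_smul_left, symProd_smul_right]
      abel
    -- u, v, w are linearly independent
    have ind : ∀ a b c : ℂ, a • u + b • v + c • w = 0 → a = 0 ∧ b = 0 ∧ c = 0 := by
      intro a b c h
      by_cases hc0 : c = 0
      · by_cases hb0 : b = 0
        · refine ⟨?_, hb0, hc0⟩
          by_contra ha0
          apply hu
          have : u = (0 : ℂ) • v + (0 : ℂ) • w := by
            have : a • u = 0 := by
              have := h; rw [hb0, hc0] at this; simpa using this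
            have := smul_eq_zero.mp this
            rcases this with h' | h'
            · exact absurd h' ha0
            · simp [h']
          rw [this]
          exact Submodule.add_mem _
            (Submodule.smul_mem _ _ (Submodule.subset_span (by simp)))
            (Submodule.smul_mem _ _ (Submodule.subset_span (by simp)))
        · exfalso
          apply hv
          rw [Submodule.mem_span_pair]
          refine ⟨-b⁻¹ * a, 0, ?_⟩
          rw [hc0] at h
          have : b • v = -(a • u) := by
            have h' : a • u + b • v = 0 := by simpa using h
            linear_combination (norm := module) h'
          have : v = b⁻¹ • -(a • u) := by
            rw [← this, smul_smul, inv_mul_cancel₀ hb0, one_smul]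
          rw [this]
          module
      · exfalso
        apply hw
        rw [Submodule.mem_span_pair]
        refine ⟨-c⁻¹ * a, -c⁻¹ * b, ?_⟩
        have hcw : c • w = -(a • u + b • v) := by
          linear_combination (norm := module) h
        have : w = c⁻¹ • -(a • u + b • v) := by
          rw [← hcw, smul_smul, inv_mul_cancel₀ hc0, one_smul]
        rw [this]
        module
    obtain ⟨α, β, hαβ⟩ := Submodule.mem_span_pair.mp (H u v)
    obtain ⟨γ, δ, hγδ⟩ := Submodule.mem_span_pair.mp (H v w)
    obtain ⟨ε, ζ, hεζ⟩ := Submodule.mem_span_pair.mp (H w u)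
    -- from degeneracy of (u+v, w) : γ + ζ = 0
    obtain ⟨p, q, hpq⟩ := Submodule.mem_span_pair.mp (H (u + v) w)
    have hbr : ⁅u + v, w⁆ = -(ε • w + ζ • u) + (γ • v + δ • w) := by
      rw [add_lie, ← lie_skew, ← hεζ, ← hγδ]
    have key1 : γ + ζ = 0 := by
      have e : (p + ζ) • u + (p - γ) • v + (q + ε - δ) • w
          = (p • (u + v) + q • w) - (-(ε • w + ζ • u) + (γ • v + δ • w)) := by module
      rw [hpq, hbr, sub_self] at e
      obtain ⟨h1, h2, _⟩ := ind _ _ _ e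
      linear_combination h1 - h2
    -- from degeneracy of (u+w, v) : α + δ = 0
    obtain ⟨p', q', hpq'⟩ := Submodule.mem_span_pair.mp (H (u + w) v)
    have hbr' : ⁅u + w, v⁆ = (α • u + β • v) + -(γ • v + δ • w) := by
      rw [add_lie, show ⁅w, v⁆ = -⁅v, w⁆ from (lie_skew w v).symm, ← hαβ, ← hγδ]
    have key2 : α + δ = 0 := by
      have e : (p' - α) • u + (q' - β + γ) • v + (p' + δ) • w
          = (p' • (u + w) + q' • v) - ((α • u + β • v) + -(γ • v + δ • w)) := by module
      rw [hpq', hbr', sub_self] at e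
      obtain ⟨h1, _, h3⟩ := ind _ _ _ e
      linear_combination h3 - h1
    -- from degeneracy of (v+w, u) : β + ε = 0
    obtain ⟨p'', q'', hpq''⟩ := Submodule.mem_span_pair.mp (H (v + w) u)
    have hbr'' : ⁅v + w, u⁆ = -(α • u + β • v) + (ε • w + ζ • u) := by
      rw [add_lie, show ⁅v, u⁆ = -⁅u, v⁆ from (lie_skew v u).symm, ← hαβ, ← hεζ]
    have key3 : β + ε = 0 := by
      have e : (q'' + α - ζ) • u + (p'' + β) • v + (p'' - ε) • w
          = (p'' • (v + w) + q'' • u) - (-(α • u + β • v) + (ε • w + ζ • u)) := by module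
      rw [hpq'', hbr'', sub_self] at e
      obtain ⟨_, h2, h3⟩ := ind _ _ _ e
      linear_combination h2 - h3
    rw [← hαβ, ← hγδ, ← hεζ]
    simp only [symProd_add_right, symProd_smul_right]
    rw [symProd_comm v u, symProd_comm w u, symProd_comm w v]
    have hγ : γ = -ζ := by linear_combination key1
    have hα : α = -δ := by linear_combination key2
    have hβ : β = -ε := by linear_combination key3
    rw [hγ, hα, hβ]
    module
end

section
/- Let V be a finite-dimensional real vector space, and consider W = V ⊕ V* with the natural symmetric pairing ⟨X+ξ, Y+η⟩ = ½(ξ(Y) + η(X)). Let V₊ ⊆ W be a subspace on which the pairing restricts to a positive definite form and which has dimension dim V. Then V₊ ∩ V = 0 and V₊ ∩ V* = 0, and consequently V₊ is the graph of a linear map a : V → V* whose symmetric part g (defined by g(X,Y) = ½(a(X)(Y) + a(Y)(X))) is a positive definite bilinear form on V. -/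
/-! Both `V` and `V*` are isotropic for the pairing, so a subspace on which it is positive definite
meets each of them only in `0`. Meeting `V*` trivially makes the projection `V₊ → V` injective,
hence bijective since `dim V₊ = dim V`, so `V₊` is the graph of some `a : V → V*`; evaluating the
pairing on `X + a X ∈ V₊` gives exactly the symmetric part of `a` at `(X, X)`. -/

open Function

theorem Submodule.inf_eq_bot_of_pos_of_eq_zero {R M : Type*} [Semiring R] [Preorder R]
    [AddCommMonoid M] [Module R M] (Q : M → R) {S T : Submodule R M}
    (hS : ∀ u ∈ S, u ≠ 0 → 0 < Q u) (hT : ∀ u ∈ T, Q u = 0) : S ⊓ T = ⊥ := by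
  refine (Submodule.eq_bot_iff _).2 fun u ⟨huS, huT⟩ ↦ ?_
  by_contra hu
  exact (hS u huS hu).ne' (hT u huT)

theorem Submodule.injective_fst_comp_subtype_of_inf_eq_bot {R M N : Type*} [Ring R]
    [AddCommGroup M] [Module R M] [AddCommGroup N] [Module R N] {S : Submodule R (M × N)}
    (h : S ⊓ LinearMap.range (LinearMap.inr R M N) = ⊥) : Injective (Prod.fst ∘ S.subtype) := by
  have hker : LinearMap.ker ((LinearMap.fst R M N).comp S.subtype) = ⊥ := by
    rw [LinearMap.ker_comp, LinearMap.ker_fst, ← Submodule.disjoint_iff_comap_eq_bot,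
      disjoint_iff, h]
  exact LinearMap.ker_eq_bot.1 hker

theorem Submodule.exists_eq_graph_of_finrank_eq {K M N : Type*} [Field K] [AddCommGroup M]
    [Module K M] [FiniteDimensional K M] [AddCommGroup N] [Module K N]
    {S : Submodule K (M × N)} (h : S ⊓ LinearMap.range (LinearMap.inr K M N) = ⊥)
    (hdim : Module.finrank K S = Module.finrank K M) :
    ∃ a : M →ₗ[K] N, S = LinearMap.graph a := by
  have hinj : Injective ((LinearMap.fst K M N).comp S.subtype) :=
    S.injective_fst_comp_subtype_of_inf_eq_bot h
  have : FiniteDimensional K S := Module.Finite.of_injective _ hinj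
  exact S.exists_eq_graph
    ⟨hinj, (LinearMap.injective_iff_surjective_of_finrank_eq_finrank hdim).1 hinj⟩

theorem positive_definite_subspace_is_metric_graph
    (V : Type*) [AddCommGroup V] [Module ℝ V] [FiniteDimensional ℝ V]
    (p : (V × Module.Dual ℝ V) →ₗ[ℝ] (V × Module.Dual ℝ V) →ₗ[ℝ] ℝ)
    (hp : ∀ u v : V × Module.Dual ℝ V, p u v = (1/2) * (u.2 v.1 + v.2 u.1))
    (Vp : Submodule ℝ (V × Module.Dual ℝ V))
    (hpos : ∀ u ∈ Vp, u ≠ 0 → 0 < p u u)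
    (hdim : Module.finrank ℝ Vp = Module.finrank ℝ V) :
    Vp ⊓ LinearMap.range (LinearMap.inl ℝ V (Module.Dual ℝ V)) = ⊥ ∧
    Vp ⊓ LinearMap.range (LinearMap.inr ℝ V (Module.Dual ℝ V)) = ⊥ ∧
    ∃ a : V →ₗ[ℝ] Module.Dual ℝ V,
      Vp = LinearMap.graph a ∧
      ∀ X : V, X ≠ 0 → 0 < (1/2) * (a X X + a X X) := by
  have hV : Vp ⊓ LinearMap.range (LinearMap.inl ℝ V (Module.Dual ℝ V)) = ⊥ :=
    Submodule.inf_eq_bot_of_pos_of_eq_zero (fun u ↦ p u u) hpos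
      (by rintro _ ⟨X, rfl⟩; simp [hp])
  have hVdual : Vp ⊓ LinearMap.range (LinearMap.inr ℝ V (Module.Dual ℝ V)) = ⊥ :=
    Submodule.inf_eq_bot_of_pos_of_eq_zero (fun u ↦ p u u) hpos
      (by rintro _ ⟨ξ, rfl⟩; simp [hp])
  obtain ⟨a, rfl⟩ := Submodule.exists_eq_graph_of_finrank_eq hVdual hdim
  refine ⟨hV, hVdual, a, rfl, fun X hX ↦ ?_⟩
  have hmem : (X, a X) ∈ LinearMap.graph a := (LinearMap.mem_graph_iff _ _).2 rfl
  simpa [hp] using hpos _ hmem (by simp [hX])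
end

section
/- Let V be a finite-dimensional real vector space and W = V ⊕ V* with the natural pairing ⟨X+ξ, Y+η⟩ = ½(ξ(Y)+η(X)). Suppose G : W → W is a symmetric involution (G² = id, ⟨Gu,v⟩ = ⟨u,Gv⟩) such that ⟨Gu,u⟩ > 0 for all u ≠ 0, and let V₊, V₋ be its (+1)- and (−1)-eigenspaces. Then V₊ = graph(g+b) and V₋ = graph(−g+b) for a unique positive definite symmetric form g and skew form b on V. -/
/-!
An involution splits `W = V ⊕ V*` as `V₊ ⊕ V₋`. On `V₊` and `V₋` the pairing is definite (it equals
`±⟨G u, u⟩`), whereas it vanishes on `V*`; so both eigenspaces meet `V*` trivially and, by counting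
dimensions, are graphs of maps `A, B : V → V*`. Self-adjointness of `G` makes `V₊ ⟂ V₋`, that is
`B = -Aᵀ`, hence `g = (A - B)/2` is symmetric, `b = (A + B)/2` is skew and `g(X, X) = A(X, X) > 0`.
-/

open Module Module.End

section Involution

variable {K M : Type*} [Field K] [NeZero (2 : K)] [AddCommGroup M] [Module K M]

theorem Module.End.isCompl_eigenspace_one_neg_one {G : End K M} (hG : G ^ 2 = 1) :
    IsCompl (G.eigenspace 1) (G.eigenspace (-1)) := by
  have hGG : ∀ u, G (G u) = u := fun u => by simpa [sq] using LinearMap.congr_fun hG u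
  have h1 : (1 : K) ≠ -1 := fun h => two_ne_zero (α := K) (by linear_combination h)
  refine ⟨G.disjoint_genEigenspace h1 1 1, ?_⟩
  rw [codisjoint_iff, Submodule.eq_top_iff']
  intro u
  -- `u = ½ (u + G u) + ½ (u - G u)`
  have hmem_one : (2⁻¹ : K) • (u + G u) ∈ G.eigenspace 1 := by
    rw [mem_eigenspace_iff, map_smul, map_add, hGG]
    module
  have hmem_neg_one : (2⁻¹ : K) • (u - G u) ∈ G.eigenspace (-1) := by
    rw [mem_eigenspace_iff, map_smul, map_sub, hGG]
    module
  convert Submodule.add_mem_sup hmem_one hmem_neg_one using 1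
  match_scalars <;> field_simp <;> ring

end Involution

namespace LinearMap

variable {R M N : Type*} [Semiring R] [AddCommMonoid M] [AddCommMonoid N] [Module R M] [Module R N]

theorem graph_injective : Function.Injective (graph : (M →ₗ[R] N) → Submodule R (M × N)) := by
  intro f g h
  ext x
  have : (x, f x) ∈ g.graph := h ▸ (mem_graph_iff _ _).2 rfl
  exact (mem_graph_iff _ _).1 this

end LinearMap

namespace Submodule

variable {K V M : Type*} [Field K] [AddCommGroup V] [Module K V] [AddCommGroup M] [Module K M]

theorem injective_fst_comp_subtype {U : Submodule K (V × M)} (hU : ∀ u ∈ U, u.1 = 0 → u = 0) :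
    Function.Injective ((LinearMap.fst K V M).comp U.subtype) := by
  rw [← LinearMap.ker_eq_bot, eq_bot_iff]
  intro u hu
  rw [Submodule.mem_bot, ← Subtype.coe_inj]
  exact hU u u.2 hu

variable [FiniteDimensional K V] [FiniteDimensional K M]

theorem exists_eq_graph_of_isCompl {U U' : Submodule K (V × M)} (h : IsCompl U U')
    (hM : finrank K M = finrank K V) (hU : ∀ u ∈ U, u.1 = 0 → u = 0)
    (hU' : ∀ u ∈ U', u.1 = 0 → u = 0) : ∃ f : V →ₗ[K] M, U = f.graph := by
  have hinj := injective_fst_comp_subtype hU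
  have hle := LinearMap.finrank_le_finrank_of_injective hinj
  have hle' := LinearMap.finrank_le_finrank_of_injective (injective_fst_comp_subtype hU')
  have hsum := finrank_add_eq_of_isCompl h
  rw [finrank_prod, hM] at hsum
  exact exists_eq_graph ⟨hinj,
    (LinearMap.injective_iff_surjective_of_finrank_eq_finrank (by omega)).1 hinj⟩

end Submodule

section SelfAdjoint

variable {K M : Type*} [Field K] [AddCommGroup M] [Module K M]

theorem LinearMap.apply_eq_zero_of_mem_eigenspace {p : M →ₗ[K] M →ₗ[K] K} {G : End K M}
    (hG : ∀ u v, p (G u) v = p u (G v)) {μ ν : K} (hμν : μ ≠ ν) {u v : M}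
    (hu : u ∈ G.eigenspace μ) (hv : v ∈ G.eigenspace ν) : p u v = 0 := by
  have := hG u v
  rw [mem_eigenspace_iff.1 hu, mem_eigenspace_iff.1 hv, map_smul, map_smul] at this
  simpa [sub_eq_zero, hμν] using congrArg (· - ν * p u v) this

end SelfAdjoint

section DualPairing

variable {K V : Type*} [Field K] [Preorder K] [AddCommGroup V] [Module K V]

theorem eq_zero_of_mem_eigenspace_of_fst_eq_zero
    {p : (V × Dual K V) →ₗ[K] (V × Dual K V) →ₗ[K] K}
    (hp : ∀ u v : V × Dual K V, p u v = (1/2) * (u.2 v.1 + v.2 u.1)) {G : End K (V × Dual K V)}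
    (hGpos : ∀ u, u ≠ 0 → 0 < p (G u) u) {μ : K} {u : V × Dual K V} (hu : u ∈ G.eigenspace μ)
    (hu₁ : u.1 = 0) : u = 0 := by
  by_contra hne
  have := hGpos u hne
  rw [mem_eigenspace_iff.1 hu, hp] at this
  simp [hu₁] at this

end DualPairing

theorem existsUnique_add_eq_and_neg_add_eq (K : Type*) {M : Type*} [Field K] [NeZero (2 : K)]
    [AddCommGroup M] [Module K M] (a c : M) :
    ∃! x : M × M, x.1 + x.2 = a ∧ -x.1 + x.2 = c := by
  refine ⟨((2⁻¹ : K) • (a - c), (2⁻¹ : K) • (a + c)), ⟨?_, ?_⟩, ?_⟩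
  · match_scalars <;> field_simp <;> ring
  · match_scalars <;> field_simp <;> ring
  rintro ⟨x, y⟩ ⟨rfl, rfl⟩
  ext <;> dsimp only <;> match_scalars <;> field_simp <;> ring

section Bilinear

variable {K V : Type*} [Field K] [NeZero (2 : K)] [AddCommGroup V] [Module K V]

theorem symm_and_skew_of_add_eq_of_neg_add_eq {g b A B : V →ₗ[K] Dual K V} (hA : g + b = A)
    (hB : -g + b = B) (hAB : ∀ X Y, A X Y + B Y X = 0) :
    (∀ X Y, g X Y = g Y X) ∧ (∀ X, g X X = A X X) ∧ (∀ X Y, b X Y = -b Y X) := by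
  subst hA hB
  simp only [LinearMap.add_apply, LinearMap.neg_apply] at hAB ⊢
  refine ⟨fun X Y => ?_, fun X => ?_, fun X Y => ?_⟩ <;>
    refine mul_left_cancel₀ (two_ne_zero (α := K)) ?_
  · linear_combination hAB X Y - hAB Y X
  · linear_combination -hAB X X
  · linear_combination hAB X Y + hAB Y X

end Bilinear

theorem generalized_metric_graph_decomposition
    (V : Type*) [AddCommGroup V] [Module ℝ V] [FiniteDimensional ℝ V]
    (p : (V × Module.Dual ℝ V) →ₗ[ℝ] (V × Module.Dual ℝ V) →ₗ[ℝ] ℝ)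
    (hp : ∀ u v : V × Module.Dual ℝ V, p u v = (1/2) * (u.2 v.1 + v.2 u.1))
    (G : Module.End ℝ (V × Module.Dual ℝ V))
    (hG2 : G ^ 2 = 1)
    (hGsym : ∀ u v, p (G u) v = p u (G v))
    (hGpos : ∀ u, u ≠ 0 → 0 < p (G u) u) :
    ∃! gb : (V →ₗ[ℝ] Module.Dual ℝ V) × (V →ₗ[ℝ] Module.Dual ℝ V),
      (∀ X Y : V, gb.1 X Y = gb.1 Y X) ∧
      (∀ X : V, X ≠ 0 → 0 < gb.1 X X) ∧
      (∀ X Y : V, gb.2 X Y = -gb.2 Y X) ∧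
      Module.End.eigenspace G 1 = LinearMap.graph (gb.1 + gb.2) ∧
      Module.End.eigenspace G (-1) = LinearMap.graph (-gb.1 + gb.2) := by
  have hcompl := isCompl_eigenspace_one_neg_one hG2
  have hfst : ∀ μ, ∀ u ∈ G.eigenspace μ, u.1 = 0 → u = 0 :=
    fun _ _ hu => eq_zero_of_mem_eigenspace_of_fst_eq_zero hp hGpos hu
  obtain ⟨A, hA⟩ := Submodule.exists_eq_graph_of_isCompl hcompl Subspace.dual_finrank_eq
    (hfst 1) (hfst (-1))
  obtain ⟨B, hB⟩ := Submodule.exists_eq_graph_of_isCompl hcompl.symm Subspace.dual_finrank_eq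
    (hfst (-1)) (hfst 1)
  have hmemA (X : V) : (X, A X) ∈ G.eigenspace 1 := hA ▸ (LinearMap.mem_graph_iff _ _).2 rfl
  have hmemB (X : V) : (X, B X) ∈ G.eigenspace (-1) := hB ▸ (LinearMap.mem_graph_iff _ _).2 rfl
  have hAB (X Y : V) : A X Y + B Y X = 0 := by
    have := LinearMap.apply_eq_zero_of_mem_eigenspace hGsym (by norm_num) (hmemA X) (hmemB Y)
    rw [hp] at this
    simpa using this
  have hApos (X : V) (hX : X ≠ 0) : 0 < A X X := by
    have := hGpos (X, A X) (by simp [hX])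
    rw [mem_eigenspace_iff.1 (hmemA X), one_smul, hp] at this
    linarith
  obtain ⟨⟨g, b⟩, ⟨hgbA, hgbB⟩, huniq⟩ := existsUnique_add_eq_and_neg_add_eq ℝ A B
  obtain ⟨hg, hgA, hb⟩ := symm_and_skew_of_add_eq_of_neg_add_eq hgbA hgbB hAB
  refine ⟨(g, b), ⟨hg, fun X hX => hgA X ▸ hApos X hX, hb, hgbA ▸ hA, hgbB ▸ hB⟩, ?_⟩
  rintro ⟨g', b'⟩ ⟨-, -, -, hA', hB'⟩
  exact huniq _ ⟨LinearMap.graph_injective (hA'.symm.trans hA),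
    LinearMap.graph_injective (hB'.symm.trans hB)⟩
end

section
/- Let V be a 2n-dimensional real vector space with inner product g and compatible complex structures I₊, I₋, and let P± := ½(1 - iI±) be the projections of V_ℂ onto the +i eigenspaces T±^{1,0}. Define σ₊ := Q - i I₊ Q : V*_ℂ → V_ℂ where Q = -½[I₊,I₋]g⁻¹. Then σ₊ = 4 g⁻¹ P̄₊ P̄₋ P₊, where P̄± = ½(1 + iI±) and I± acts on V* by the dual maps. -/
/-!
Compatibility with `g` together with `I± ^ 2 = -1` makes `I±` skew, so `g⁻¹ I±* = -I± g⁻¹`: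
`g⁻¹` turns `P̄±` on `V*` into `P± = ½(1 - iI±)` on `V`, and `P₊` into `P̄₊`. Both sides are then
operators applied to `g⁻¹ ξ`, and the claim becomes the identity
`(1 - iJ)(-½[J, K]) = 4 P_J P_K P̄_J` in any complex algebra with `J² = -1`.
Since `P_J P̄_J = 0` and `P_J J = i P_J`, both sides equal `-2i P_J K P̄_J`.
-/

open TensorProduct

section

variable {V : Type*} [AddCommGroup V] [Module ℝ V]

/-- The projection `P = ½(1 - i I*)` on the complexified dual space, applied to a vector. -/
noncomputable def Pproj (I : Module.End ℝ V) (ξ : ℂ ⊗[ℝ] Module.Dual ℝ V) :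
    ℂ ⊗[ℝ] Module.Dual ℝ V :=
  (1/2 : ℂ) • (ξ - Complex.I • ((I.dualMap).baseChange ℂ ξ))

/-- The projection `P̄ = ½(1 + i I*)` on the complexified dual space, applied to a vector. -/
noncomputable def Pbarproj (I : Module.End ℝ V) (ξ : ℂ ⊗[ℝ] Module.Dual ℝ V) :
    ℂ ⊗[ℝ] Module.Dual ℝ V :=
  (1/2 : ℂ) • (ξ + Complex.I • ((I.dualMap).baseChange ℂ ξ))

end

theorem LinearMap.dualMap_comp_eq_comp_neg {R M : Type*} [CommRing R] [AddCommGroup M]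
    [Module R M] {g : M →ₗ[R] Module.Dual R M} {I : Module.End R M}
    (hI : I ^ 2 = -1) (hgI : ∀ X Y, g (I X) (I Y) = g X Y) :
    I.dualMap ∘ₗ g = g ∘ₗ (-I) := by
  ext X Y
  calc g X (I Y) = g (I X) (I (I Y)) := (hgI X (I Y)).symm
    _ = g (-I X) Y := by
      rw [← Module.End.mul_apply, ← sq, hI]
      simp

theorem LinearMap.comp_eq_comp_of_inverse {R M N : Type*} [Semiring R] [AddCommMonoid M]
    [AddCommMonoid N] [Module R M] [Module R N] {f : M →ₗ[R] N} {f' : N →ₗ[R] M}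
    (h₁ : f ∘ₗ f' = LinearMap.id) (h₂ : f' ∘ₗ f = LinearMap.id)
    {A : Module.End R N} {B : Module.End R M} (h : A ∘ₗ f = f ∘ₗ B) :
    f' ∘ₗ A = B ∘ₗ f' :=
  calc f' ∘ₗ A = f' ∘ₗ (A ∘ₗ f) ∘ₗ f' := by
        rw [LinearMap.comp_assoc, h₁, LinearMap.comp_id]
    _ = B ∘ₗ f' := by
        rw [h, ← LinearMap.comp_assoc, ← LinearMap.comp_assoc, h₂, LinearMap.id_comp]

namespace Complex

variable {A : Type*} [Ring A] [Algebra ℂ A]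

noncomputable def holProj (J : A) : A := (1/2 : ℂ) • (1 - I • J)

noncomputable def antiholProj (J : A) : A := (1/2 : ℂ) • (1 + I • J)

variable {J : A}

theorem holProj_mul_antiholProj (hJ : J ^ 2 = -1) : holProj J * antiholProj J = 0 := by
  simp only [holProj, antiholProj, mul_add, sub_mul, mul_one, one_mul, mul_smul_comm,
    smul_mul_assoc, ← sq, hJ, smul_add, smul_sub, smul_neg, smul_smul]
  match_scalars
  · linear_combination (1/4 : ℂ) * I_sq
  · ring

theorem holProj_mul_self (hJ : J ^ 2 = -1) : holProj J * J = I • holProj J := by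
  simp only [holProj, smul_mul_assoc, sub_mul, one_mul, ← sq, hJ, smul_sub, smul_neg, smul_smul]
  match_scalars
  · linear_combination (1/2 : ℂ) * I_sq
  · ring

theorem one_sub_I_smul_mul_commutator (hJ : J ^ 2 = -1) (K : A) :
    (1 - I • J) * ((-(1/2) : ℂ) • (J * K - K * J))
      = (4 : ℂ) • (holProj J * holProj K * antiholProj J) := by
  have one_sub_eq : 1 - I • J = (2 : ℂ) • holProj J := by simp [holProj, smul_smul]
  have h₁ : holProj J * holProj K * antiholProj J
      = (-(I / 2)) • (holProj J * K * antiholProj J) := by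
    have holProj_K : holProj K = (1/2 : ℂ) • 1 - (I / 2) • K := by
      simp [holProj, smul_sub, smul_smul, div_eq_mul_inv, mul_comm]
    rw [holProj_K, mul_sub, sub_mul, mul_smul_comm, mul_one, smul_mul_assoc,
      holProj_mul_antiholProj hJ, mul_smul_comm, smul_mul_assoc, smul_zero, zero_sub, neg_smul]
  have h₂ : (1 - I • J) * (J * K - K * J) = (4 * I) • (holProj J * K * antiholProj J) := by
    rw [one_sub_eq, smul_mul_assoc, mul_sub, ← mul_assoc, holProj_mul_self hJ]
    simp only [antiholProj, mul_smul_comm, mul_add, mul_one, smul_mul_assoc, mul_assoc, smul_add,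
      smul_smul]
    match_scalars
    · ring
    · linear_combination (-2 : ℂ) * I_sq
  rw [mul_smul_comm, h₂, h₁, smul_smul, smul_smul]
  ring_nf

end Complex

section

variable {V : Type*} [AddCommGroup V] [Module ℝ V] {ginv : Module.Dual ℝ V →ₗ[ℝ] V}
  {I : Module.End ℝ V}

theorem baseChange_apply_baseChange_dualMap (h : ginv ∘ₗ I.dualMap = (-I) ∘ₗ ginv)
    (ξ : ℂ ⊗[ℝ] Module.Dual ℝ V) :
    ginv.baseChange ℂ (I.dualMap.baseChange ℂ ξ) = -I.baseChange ℂ (ginv.baseChange ℂ ξ) := by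
  rw [← LinearMap.comp_apply, ← LinearMap.baseChange_comp, h, LinearMap.baseChange_comp,
    LinearMap.baseChange_neg]
  rfl

theorem baseChange_apply_Pbarproj (h : ginv ∘ₗ I.dualMap = (-I) ∘ₗ ginv)
    (ξ : ℂ ⊗[ℝ] Module.Dual ℝ V) :
    ginv.baseChange ℂ (Pbarproj I ξ)
      = Complex.holProj (I.baseChange ℂ) (ginv.baseChange ℂ ξ) := by
  simp [Pbarproj, Complex.holProj, baseChange_apply_baseChange_dualMap h, sub_eq_add_neg]

theorem baseChange_apply_Pproj (h : ginv ∘ₗ I.dualMap = (-I) ∘ₗ ginv)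
    (ξ : ℂ ⊗[ℝ] Module.Dual ℝ V) :
    ginv.baseChange ℂ (Pproj I ξ)
      = Complex.antiholProj (I.baseChange ℂ) (ginv.baseChange ℂ ξ) := by
  simp [Pproj, Complex.antiholProj, baseChange_apply_baseChange_dualMap h]

end

theorem sigma_plus_factorization_general
    (V : Type*) [AddCommGroup V] [Module ℝ V]
    (g : V →ₗ[ℝ] Module.Dual ℝ V) (ginv : Module.Dual ℝ V →ₗ[ℝ] V)
    (hg₁ : g ∘ₗ ginv = LinearMap.id) (hg₂ : ginv ∘ₗ g = LinearMap.id)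
    (Ip Im : Module.End ℝ V) (hIp : Ip ^ 2 = -1) (hIm : Im ^ 2 = -1)
    (hcp : ∀ X Y, g (Ip X) (Ip Y) = g X Y)
    (hcm : ∀ X Y, g (Im X) (Im Y) = g X Y)
    (Q : Module.Dual ℝ V →ₗ[ℝ] V)
    (hQ : Q = (-(1/2 : ℝ)) • ((Ip * Im - Im * Ip) ∘ₗ ginv)) :
    ∀ ξ : ℂ ⊗[ℝ] Module.Dual ℝ V,
      Q.baseChange ℂ ξ - Complex.I • (Ip.baseChange ℂ (Q.baseChange ℂ ξ))
        = (4 : ℂ) • (ginv.baseChange ℂ (Pbarproj Ip (Pbarproj Im (Pproj Ip ξ)))) := by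
  intro ξ
  have ginv_comp_dualMap {I : Module.End ℝ V} (hI : I ^ 2 = -1)
      (hgI : ∀ X Y, g (I X) (I Y) = g X Y) : ginv ∘ₗ I.dualMap = (-I) ∘ₗ ginv :=
    LinearMap.comp_eq_comp_of_inverse hg₁ hg₂ (LinearMap.dualMap_comp_eq_comp_neg hI hgI)
  set J := Ip.baseChange ℂ
  set K := Im.baseChange ℂ
  set x := ginv.baseChange ℂ ξ
  have hJ : J ^ 2 = -1 := by
    rw [← LinearMap.baseChange_pow, hIp, LinearMap.baseChange_neg, LinearMap.baseChange_one]
  have hQx : Q.baseChange ℂ ξ = ((-(1/2) : ℂ) • (J * K - K * J)) x := by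
    rw [hQ, LinearMap.baseChange_smul, LinearMap.baseChange_comp, LinearMap.baseChange_sub,
      LinearMap.baseChange_mul, LinearMap.baseChange_mul, LinearMap.smul_apply,
      ← algebraMap_smul ℂ, Complex.coe_algebraMap]
    push_cast
    rfl
  calc Q.baseChange ℂ ξ - Complex.I • J (Q.baseChange ℂ ξ)
      = ((1 - Complex.I • J) * ((-(1/2) : ℂ) • (J * K - K * J))) x := by
        rw [hQx]; rfl
    _ = (4 : ℂ) • (Complex.holProj J * Complex.holProj K * Complex.antiholProj J) x := by
        rw [Complex.one_sub_I_smul_mul_commutator hJ]; rfl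
    _ = _ := by
        rw [baseChange_apply_Pbarproj (ginv_comp_dualMap hIp hcp),
          baseChange_apply_Pbarproj (ginv_comp_dualMap hIm hcm),
          baseChange_apply_Pproj (ginv_comp_dualMap hIp hcp)]
        rfl

theorem sigma_plus_factorization
    (V : Type*) [AddCommGroup V] [Module ℝ V] [FiniteDimensional ℝ V]
    (g : V →ₗ[ℝ] Module.Dual ℝ V) (ginv : Module.Dual ℝ V →ₗ[ℝ] V)
    (hgsym : ∀ X Y, g X Y = g Y X)
    (hgpos : ∀ X, X ≠ 0 → 0 < g X X)
    (hg₁ : g ∘ₗ ginv = LinearMap.id) (hg₂ : ginv ∘ₗ g = LinearMap.id)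
    (Ip Im : Module.End ℝ V) (hIp : Ip ^ 2 = -1) (hIm : Im ^ 2 = -1)
    (hcp : ∀ X Y, g (Ip X) (Ip Y) = g X Y)
    (hcm : ∀ X Y, g (Im X) (Im Y) = g X Y)
    (Q : Module.Dual ℝ V →ₗ[ℝ] V)
    (hQ : Q = (-(1/2 : ℝ)) • ((Ip * Im - Im * Ip) ∘ₗ ginv)) :
    ∀ ξ : ℂ ⊗[ℝ] Module.Dual ℝ V,
      Q.baseChange ℂ ξ - Complex.I • (Ip.baseChange ℂ (Q.baseChange ℂ ξ))
        = (4 : ℂ) • (ginv.baseChange ℂ (Pbarproj Ip (Pbarproj Im (Pproj Ip ξ)))) :=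
  sigma_plus_factorization_general V g ginv hg₁ hg₂ Ip Im hIp hIm hcp hcm Q hQ
end

section
/- Let g₀ be a positive semidefinite symmetric bilinear form on a finite-dimensional real vector space V which is positive definite on a complement of the subspace K = {v : g₀(v,v) = 0}, and let h be a symmetric bilinear form which is positive definite on K. Then there exists ε > 0 such that g₀ + t·h is positive definite on V for all 0 < t ≤ ε. -/
theorem semidef_plus_small_positive
    (V : Type*) [AddCommGroup V] [Module ℝ V] [FiniteDimensional ℝ V]
    (g₀ h : V →ₗ[ℝ] V →ₗ[ℝ] ℝ)
    (hg₀sym : ∀ v w, g₀ v w = g₀ w v) (hhsym : ∀ v w, h v w = h w v)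
    (hg₀ : ∀ v, 0 ≤ g₀ v v)
    (hh : ∀ v, g₀ v v = 0 → v ≠ 0 → 0 < h v v) :
    ∃ ε > 0, ∀ t : ℝ, 0 < t → t ≤ ε → ∀ v : V, v ≠ 0 →
      0 < g₀ v v + t * h v v := by
  classical
  set n := Module.finrank ℝ V with hn
  let b := Module.finBasis ℝ V
  let φ : (Fin n → ℝ) ≃ₗ[ℝ] V := b.equivFun.symm
  let B : (Fin n → ℝ) →ₗ[ℝ] (Fin n → ℝ) →ₗ[ℝ] ℝ := g₀.compl₁₂ φ.toLinearMap φ.toLinearMap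
  let C : (Fin n → ℝ) →ₗ[ℝ] (Fin n → ℝ) →ₗ[ℝ] ℝ := h.compl₁₂ φ.toLinearMap φ.toLinearMap
  have hBapp : ∀ x y, B x y = g₀ (φ x) (φ y) := fun x y => rfl
  have hCapp : ∀ x y, C x y = h (φ x) (φ y) := fun x y => rfl
  -- continuity of the quadratic forms
  have contQ : ∀ D : (Fin n → ℝ) →ₗ[ℝ] (Fin n → ℝ) →ₗ[ℝ] ℝ,
      Continuous fun x => D x x := by
    intro D
    have hL : Continuous fun x => LinearMap.toContinuousLinearMap (D x) := by
      exact (LinearMap.toContinuousLinearMap.toLinearMap.comp D).continuous_of_finiteDimensional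
    have := hL.clm_apply continuous_id
    simpa using this
  have hBcont : Continuous fun x => B x x := contQ B
  have hCcont : Continuous fun x => C x x := contQ C
  have hBpos : ∀ x, 0 ≤ B x x := fun x => hg₀ _
  have hCposK : ∀ x : Fin n → ℝ, x ≠ 0 → B x x = 0 → 0 < C x x := by
    intro x hx hBx
    exact hh _ hBx (by simpa using hx)
  -- key: positivity on the unit sphere
  have key : ∃ ε > 0, ∀ t : ℝ, 0 < t → t ≤ ε → ∀ x : Fin n → ℝ, ‖x‖ = 1 →
      0 < B x x + t * C x x := by
    set A : Set (Fin n → ℝ) := Metric.sphere 0 1 ∩ {x | C x x ≤ 0} with hA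
    have hAcompact : IsCompact A :=
      (isCompact_sphere (0 : Fin n → ℝ) 1).inter_right
        (isClosed_le hCcont continuous_const)
    by_cases hAne : A.Nonempty
    · obtain ⟨x₀, hx₀A, hx₀min⟩ := hAcompact.exists_isMinOn hAne hBcont.continuousOn
      obtain ⟨x₁, hx₁A, hx₁max⟩ := hAcompact.exists_isMaxOn hAne (hCcont.neg.continuousOn)
      set m := B x₀ x₀ with hm
      set M := -C x₁ x₁ with hM
      have hx₀ne : x₀ ≠ 0 := by
        intro hzero
        have : ‖x₀‖ = 1 := by simpa using hx₀A.1
        rw [hzero] at this; simp at this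
      have hmpos : 0 < m := by
        rcases lt_or_eq_of_le (hBpos x₀) with hlt | heq
        · exact hlt
        · exfalso
          have := hCposK x₀ hx₀ne heq.symm
          have := hx₀A.2
          simp only [Set.mem_setOf_eq] at this
          linarith
      have hMnonneg : 0 ≤ M := by
        have := hx₁A.2
        simp only [Set.mem_setOf_eq] at this
        simp [hM]; linarith
      refine ⟨m / (M + 1), by positivity, ?_⟩
      intro t ht htε x hx
      have hxS : x ∈ Metric.sphere (0 : Fin n → ℝ) 1 := by simpa using hx
      by_cases hCx : C x x ≤ 0
      · have hxA : x ∈ A := ⟨hxS, hCx⟩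
        have h1 : m ≤ B x x := hx₀min hxA
        have h2 : -C x x ≤ M := hx₁max hxA
        have h3 : t * (-C x x) ≤ t * M := by
          exact mul_le_mul_of_nonneg_left h2 ht.le
        have h4 : t * M ≤ (m / (M + 1)) * M := by
          apply mul_le_mul_of_nonneg_right htε hMnonneg
        have h5 : (m / (M + 1)) * M < m := by
          rw [div_mul_eq_mul_div, div_lt_iff₀ (by linarith)]
          nlinarith
        nlinarith
      · push_neg at hCx
        have := hBpos x
        nlinarith
    · refine ⟨1, one_pos, ?_⟩
      intro t ht htε x hx
      have hxS : x ∈ Metric.sphere (0 : Fin n → ℝ) 1 := by simpa using hx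
      have hCx : 0 < C x x := by
        by_contra hc
        push_neg at hc
        exact hAne ⟨x, hxS, hc⟩
      have := hBpos x
      nlinarith
  obtain ⟨ε, hε, hkey⟩ := key
  refine ⟨ε, hε, ?_⟩
  intro t ht htε v hv
  set x := φ.symm v with hx
  have hxne : x ≠ 0 := by
    simp only [hx, ne_eq, LinearEquiv.map_eq_zero_iff]
    exact hv
  have hrpos : (0 : ℝ) < ‖x‖ := norm_pos_iff.mpr hxne
  set r := ‖x‖ with hr
  set y := r⁻¹ • x with hy
  have hyn : ‖y‖ = 1 := by
    rw [hy, norm_smul, norm_inv, norm_norm, ← hr, inv_mul_cancel₀ hrpos.ne']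
  have hxy : x = r • y := by
    rw [hy, smul_smul, mul_inv_cancel₀ hrpos.ne', one_smul]
  have hgv : g₀ v v = B x x := by
    rw [hBapp, hx, φ.apply_symm_apply]
  have hhv : h v v = C x x := by
    rw [hCapp, hx, φ.apply_symm_apply]
  have hBscale : B x x = r ^ 2 * B y y := by
    rw [hxy]; simp [map_smul, LinearMap.smul_apply, smul_eq_mul]; ring
  have hCscale : C x x = r ^ 2 * C y y := by
    rw [hxy]; simp [map_smul, LinearMap.smul_apply, smul_eq_mul]; ring
  have hpos := hkey t ht htε y hyn
  rw [hgv, hhv, hBscale, hCscale]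
  have : 0 < r ^ 2 * (B y y + t * C y y) := by positivity
  nlinarith
end

section
/- Let J be an orthogonal complex structure on V ⊕ V* (with respect to the natural pairing), and define π_J : V* → V as the composition V* ↪ V ⊕ V* →^J V ⊕ V* ↠ V. Then π_J is skew-symmetric: η(π_J ξ) = -ξ(π_J η) for all ξ, η ∈ V*, and its kernel is { ξ ∈ V* : Jξ ∈ V* } = V* ∩ J V*. -/
theorem gcs_induces_skew_bivector
    (V : Type*) [AddCommGroup V] [Module ℝ V] [FiniteDimensional ℝ V]
    (p : (V × Module.Dual ℝ V) →ₗ[ℝ] (V × Module.Dual ℝ V) →ₗ[ℝ] ℝ)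
    (hp : ∀ u v : V × Module.Dual ℝ V,
      p u v = (1/2) * (u.2 v.1 + v.2 u.1))
    (J : Module.End ℝ (V × Module.Dual ℝ V))
    (hJ : J ^ 2 = -1)
    (horth : ∀ u v, p (J u) (J v) = p u v) :
    (∀ ξ η : Module.Dual ℝ V, η ((J (0, ξ)).1) = -ξ ((J (0, η)).1)) ∧
    (∀ ξ : Module.Dual ℝ V, (J (0, ξ)).1 = 0 ↔ J (0, ξ) ∈
      LinearMap.range (LinearMap.inr ℝ V (Module.Dual ℝ V))) := by
  have hJJ : ∀ w, J (J w) = -w := by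
    intro w
    have := congrFun (congrArg DFunLike.coe hJ) w
    simpa [pow_two, Module.End.mul_apply] using this
  constructor
  · intro ξ η
    have key : p (J (0, ξ)) (0, η) = - p (0, ξ) (J (0, η)) := by
      have h1 : p (J (0, ξ)) (J (J (0, η))) = p (0, ξ) (J (0, η)) :=
        horth _ _
      rw [hJJ] at h1
      rw [show (-(0, η) : V × Module.Dual ℝ V) = (0, -η) from by simp [Prod.neg_mk]] at h1
      have h2 : p (J (0, ξ)) (0, -η) = - p (J (0, ξ)) (0, η) := by
        rw [show ((0, -η) : V × Module.Dual ℝ V) = -(0, η) from by simp [Prod.neg_mk], map_neg]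
      linarith
    rw [hp, hp] at key
    simp only [show ((0, ξ) : V × Module.Dual ℝ V).1 = 0 from rfl,
      show ((0, ξ) : V × Module.Dual ℝ V).2 = ξ from rfl,
      show ((0, η) : V × Module.Dual ℝ V).1 = 0 from rfl,
      show ((0, η) : V × Module.Dual ℝ V).2 = η from rfl,
      map_zero, add_zero, zero_add] at key
    linarith
  · intro ξ
    constructor
    · intro h
      exact ⟨(J (0, ξ)).2, by ext <;> simp [h]⟩
    · rintro ⟨η, hη⟩
      rw [← hη]
      rfl
end
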